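/- Let q be a prime power and k, d positive integers, and set M = (q−1)(q^{k(d+1)}−1)/(q^k−1). Suppose c divides M and c < (q−1)(q^k − q^{−kd})/(q^k − 1). Then h_q(M/c) ≥ kd + k − c(q^k−1)/(q−1). -/

import Mathlib

/-!
Put `K = k(d+1)`, `S = (q^k-1)/(q-1)`, `e = cS`, `n = M/c`, so that `ne = q^K - 1`. Let `E` be the
field with `q^K` elements, `ζ` a generator of `Eˣ` and `α = ζ^e`, an element of order `n`. Since
`n ≥ q^{kd}` exceeds the number of units of every proper subfield, `α` generates `E` over `F_q`,
so `x ↦ ∑ xᵢ αⁱ` maps `F_q^n` onto `E`, and it turns the cyclic shift into division by `α`.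
Every nonzero element of `E` is `α^a ζ^b` with `b < e`, hence the preimage of
`span {1, ζ, …, ζ^(e-1)}` is cyclically covering, of codimension at least `K - e`.
-/

open Polynomial Module

/-- The cyclic shift operator on `Fin n → F`. -/
def cycShift (F : Type*) (n : ℕ) : (Fin n → F) → (Fin n → F) :=
  fun x i => x ⟨(i.1 + 1) % n, Nat.mod_lt _ (lt_of_le_of_lt (Nat.zero_le _) i.2)⟩

/-- A subspace `U ≤ F^n` is cyclically covering if the union of its cyclic shifts is `F^n`. -/
def IsCycCovering (F : Type*) [Field F] (n : ℕ) (U : Submodule F (Fin n → F)) : Prop :=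
  ∀ x : Fin n → F, ∃ r : ℕ, (cycShift F n)^[r] x ∈ U

/-- `hq F n` : the maximum codimension of a cyclically covering subspace of `F^n`. -/
noncomputable def hq (F : Type*) [Field F] [Fintype F] (n : ℕ) : ℕ :=
  sSup {k | ∃ U : Submodule F (Fin n → F), IsCycCovering F n U ∧
    Module.finrank F (Fin n → F) - Module.finrank F U = k}

open Finset IntermediateField

theorem Submodule.finrank_sub_finrank_comap_of_surjective {K V W : Type*} [DivisionRing K]
    [AddCommGroup V] [Module K V] [FiniteDimensional K V] [AddCommGroup W] [Module K W]
    [FiniteDimensional K W] {f : V →ₗ[K] W} (hf : Function.Surjective f) (P : Submodule K W) :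
    finrank K V - finrank K (P.comap f) = finrank K W - finrank K P := by
  have hker : LinearMap.ker (P.mkQ ∘ₗ f) = P.comap f := by
    rw [LinearMap.ker_comp, Submodule.ker_mkQ]
  rw [← Submodule.finrank_quotient, ← Submodule.finrank_quotient, ← hker]
  exact ((P.mkQ ∘ₗ f).quotKerEquivOfSurjective (P.mkQ_surjective.comp hf)).finrank_eq

theorem cycShift_apply {F : Type*} {n : ℕ} [NeZero n] (x : Fin n → F) (i : Fin n) :
    cycShift F n x i = x (i + 1) := by
  simp only [cycShift, Fin.add_def, Fin.val_one', Nat.add_mod_mod]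

theorem IsCycCovering.finrank_sub_finrank_le_hq {F : Type*} [Field F] [Fintype F] {n : ℕ}
    {U : Submodule F (Fin n → F)} (hU : IsCycCovering F n U) :
    finrank F (Fin n → F) - finrank F U ≤ hq F n :=
  le_csSup ⟨finrank F (Fin n → F), by rintro _ ⟨V, -, rfl⟩; exact Nat.sub_le _ _⟩ ⟨U, hU, rfl⟩

noncomputable def cyclicEval (F : Type*) {E : Type*} [Field F] [Field E] [Algebra F E] (n : ℕ)
    (α : E) : (Fin n → F) →ₗ[F] E :=
  Fintype.linearCombination F fun i : Fin n => α ^ (i : ℕ)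

section CyclicEval

variable {F E : Type*} [Field F] [Field E] [Algebra F E] {n : ℕ}

theorem cyclicEval_apply (α : E) (x : Fin n → F) :
    cyclicEval F n α x = ∑ i, x i • α ^ (i : ℕ) :=
  Fintype.linearCombination_apply F _ x

theorem mul_cyclicEval_cycShift [NeZero n] {α : E} (hα : α ^ n = 1) (x : Fin n → F) :
    α * cyclicEval F n α (cycShift F n x) = cyclicEval F n α x := by
  simp only [cyclicEval_apply, cycShift_apply, Finset.mul_sum, mul_smul_comm, ← pow_succ']
  refine Fintype.sum_equiv (Equiv.addRight 1) _ _ fun i => ?_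
  rw [Equiv.coe_addRight, Fin.val_add, Fin.val_one', Nat.add_mod_mod, ← pow_eq_pow_mod _ hα]

theorem pow_mul_cyclicEval_iterate_cycShift [NeZero n] {α : E} (hα : α ^ n = 1) (r : ℕ)
    (x : Fin n → F) : α ^ r * cyclicEval F n α ((cycShift F n)^[r] x) = cyclicEval F n α x := by
  induction r generalizing x with
  | zero => simp
  | succ r ih =>
    rw [Function.iterate_succ_apply, pow_succ', mul_assoc, ih, mul_cyclicEval_cycShift hα]

theorem cyclicEval_surjective [NeZero n] {α : E} (hα : α ^ n = 1)
    (hgen : Algebra.adjoin F {α} = ⊤) :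
    Function.Surjective (cyclicEval F n α) := by
  have hpow : Set.range (fun i : Fin n => α ^ (i : ℕ)) = Submonoid.powers α := by
    ext y
    constructor
    · rintro ⟨i, rfl⟩; exact ⟨i, rfl⟩
    · rintro ⟨j, rfl⟩
      exact ⟨⟨j % n, Nat.mod_lt _ n.pos_of_neZero⟩, (pow_eq_pow_mod j hα).symm⟩
  rw [← LinearMap.range_eq_top, cyclicEval, Fintype.range_linearCombination, hpow,
    Submonoid.powers_eq_closure, ← Algebra.adjoin_eq_span, hgen, Algebra.top_toSubmodule]

end CyclicEval

theorem FiniteField.adjoin_simple_eq_top_of_pow_le_orderOf {F E : Type*} [Field F] [Fintype F]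
    [Field E] [Finite E] [Algebra F E] {α : E}
    (h : Fintype.card F ^ (finrank F E / 2) ≤ orderOf α) : F⟮α⟯ = ⊤ := by
  by_contra hne
  set L := F⟮α⟯
  have hα : α ≠ 0 := by
    rintro rfl
    rw [orderOf_zero] at h
    exact (pow_pos Fintype.card_pos _).not_ge h
  have hLE : 2 ≤ finrank L E := by
    have h1 : finrank L E ≠ 1 := fun h1 => hne (finrank_eq_one_iff_eq_top.mp h1)
    have h0 : finrank L E ≠ 0 := finrank_pos.ne'
    omega
  have hdeg : finrank F L ≤ finrank F E / 2 := by
    rw [Nat.le_div_iff_mul_le two_pos, ← finrank_mul_finrank F L E]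
    exact Nat.mul_le_mul_left _ hLE
  have : Fintype L := Fintype.ofFinite L
  have hcardL : Fintype.card L = Fintype.card F ^ finrank F L := card_eq_pow_finrank
  have hβ : (⟨α, mem_adjoin_simple_self F α⟩ : L) ≠ 0 := fun h0 => hα (congrArg Subtype.val h0)
  have hdvd : orderOf α ∣ Fintype.card L - 1 := by
    refine orderOf_dvd_of_pow_eq_one ?_
    simpa using congrArg Subtype.val (FiniteField.pow_card_sub_one_eq_one _ hβ)
  have hpos : 0 < Fintype.card L - 1 := by have := Fintype.one_lt_card (α := L); omega
  have := Nat.le_of_dvd hpos hdvd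
  have := Nat.pow_le_pow_right (Fintype.card_pos (α := F)) hdeg
  omega

theorem exists_eq_pow_mul_pow_of_ne_zero {E : Type*} [Field E] [Finite E] {ζ : Eˣ}
    (hζ : ∀ u, u ∈ Subgroup.zpowers ζ) {e : ℕ} (he : 0 < e) {y : E} (hy : y ≠ 0) :
    ∃ a b, b < e ∧ y = ((ζ : E) ^ e) ^ a * (ζ : E) ^ b := by
  obtain ⟨t, ht⟩ := mem_powers_iff_mem_zpowers.mpr (hζ (Units.mk0 y hy))
  refine ⟨t / e, t % e, Nat.mod_lt _ he, ?_⟩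
  rw [← pow_mul, ← pow_add, Nat.div_add_mod, ← Units.val_pow_eq_pow_val]
  exact (congrArg Units.val ht).symm

theorem sub_le_hq_of_mul_eq_card_sub_one {F E : Type*} [Field F] [Fintype F] [Field E]
    [Fintype E] [Algebra F E] {n e : ℕ} (hne : n * e = Fintype.card E - 1)
    (hn : Fintype.card F ^ (finrank F E / 2) ≤ n) : finrank F E - e ≤ hq F n := by
  classical
  have hE : 1 < Fintype.card E := Fintype.one_lt_card
  have : NeZero n := ⟨by rintro rfl; rw [zero_mul] at hne; omega⟩
  have he : 0 < e := Nat.pos_of_ne_zero (by rintro rfl; rw [mul_zero] at hne; omega)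
  obtain ⟨ζ, hζ⟩ := IsCyclic.exists_generator (α := Eˣ)
  set α : E := (ζ : E) ^ e
  have hord : orderOf α = n := by
    rw [orderOf_pow' _ he.ne', orderOf_units, orderOf_eq_card_of_forall_mem_zpowers hζ,
      Nat.card_units, Nat.card_eq_fintype_card, ← hne, Nat.gcd_mul_left_left,
      Nat.mul_div_cancel _ he]
  have hαn : α ^ n = 1 := hord ▸ pow_orderOf_eq_one α
  have hgen : Algebra.adjoin F {α} = ⊤ := by
    rw [← adjoin_simple_toSubalgebra_of_isAlgebraic (Algebra.IsAlgebraic.isAlgebraic α),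
      FiniteField.adjoin_simple_eq_top_of_pow_le_orderOf (hord ▸ hn), top_toSubalgebra]
  set W := Submodule.span F ((Finset.range e).image fun b => (ζ : E) ^ b : Set E)
  have hW : finrank F W ≤ e :=
    (finrank_span_finset_le_card _).trans (Finset.card_image_le.trans (Finset.card_range e).le)
  have hcov : IsCycCovering F n (W.comap (cyclicEval F n α)) := by
    intro x
    by_cases hx : cyclicEval F n α x = 0
    · exact ⟨0, by simp [hx]⟩
    obtain ⟨a, b, hb, hab⟩ := exists_eq_pow_mul_pow_of_ne_zero hζ he hx
    refine ⟨a, Submodule.subset_span ?_⟩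
    have : cyclicEval F n α ((cycShift F n)^[a] x) = (ζ : E) ^ b := by
      refine mul_left_cancel₀ (pow_ne_zero a (pow_ne_zero e ζ.ne_zero)) ?_
      rw [pow_mul_cyclicEval_iterate_cycShift hαn, hab]
    simpa [this] using ⟨b, hb, rfl⟩
  have := hcov.finrank_sub_finrank_le_hq
  rw [Submodule.finrank_sub_finrank_comap_of_surjective (cyclicEval_surjective hαn hgen)] at this
  omega

theorem le_of_mul_eq_mul_sub_one {n e a b : ℕ} (ha : 0 < a) (hb : 1 < b) (he : e < b)
    (h : n * e = a * b - 1) : a ≤ n := by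
  by_contra! hn
  have : n * e ≤ (a - 1) * (b - 1) := Nat.mul_le_mul (by omega) (by omega)
  have : (a - 1) * (b - 1) + 1 < a * b := by
    obtain ⟨a, rfl⟩ := Nat.exists_eq_add_of_lt ha
    obtain ⟨b, rfl⟩ := Nat.exists_eq_add_of_lt hb
    simp only [Nat.zero_add, Nat.add_sub_cancel]
    nlinarith
  omega

theorem mul_geom_sum_lt_pow {q k c : ℕ} (hq : 1 < q) (hk : 0 < k) (m : ℤ)
    (hc : (c : ℚ) < ((q : ℚ) - 1) * ((q : ℚ) ^ k - (q : ℚ) ^ m) / ((q : ℚ) ^ k - 1)) :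
    c * ∑ t ∈ range k, q ^ t < q ^ k := by
  have hq1 : (1 : ℚ) < q := by exact_mod_cast hq
  have hqk : (1 : ℚ) < (q : ℚ) ^ k := one_lt_pow₀ hq1 hk.ne'
  have hqm : (0 : ℚ) < (q : ℚ) ^ m := zpow_pos (by linarith) m
  have hS : ((∑ t ∈ range k, q ^ t : ℕ) : ℚ) = ((q : ℚ) ^ k - 1) / ((q : ℚ) - 1) := by
    push_cast; exact geom_sum_eq hq1.ne' k
  rw [lt_div_iff₀ (by linarith)] at hc
  suffices (c : ℚ) * (((q : ℚ) ^ k - 1) / ((q : ℚ) - 1)) < (q : ℚ) ^ k by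
    rw [← hS] at this; exact_mod_cast this
  rw [mul_div_assoc', div_lt_iff₀ (by linarith)]
  nlinarith

/-- Theorem 4 (general lower bound): with M = (q−1)(q^{k(d+1)}−1)/(q^k−1) and c ∣ M,
c < (q−1)(q^k − q^{−kd})/(q^k−1), we have h_q(M/c) ≥ kd + k − c(q^k−1)/(q−1). -/
theorem stmt_8 (F : Type*) [Field F] [Fintype F] (k d c M : ℕ) (hk : 0 < k) (hd : 0 < d)
    (hM : M = (Fintype.card F - 1) * ∑ r ∈ Finset.range (d + 1), Fintype.card F ^ (k * r))
    (hc : c ∣ M)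
    (hcsmall : (c : ℚ) < ((Fintype.card F : ℚ) - 1) *
      ((Fintype.card F : ℚ) ^ k - (Fintype.card F : ℚ) ^ (-(k * d : ℤ))) /
      ((Fintype.card F : ℚ) ^ k - 1)) :
    k * d + k - c * ∑ t ∈ Finset.range k, Fintype.card F ^ t ≤ hq F (M / c) := by
  set q := Fintype.card F
  have hq : 1 < q := Fintype.one_lt_card
  obtain ⟨p, _⟩ := CharP.exists F
  have : Fact p.Prime := ⟨CharP.char_is_prime F p⟩
  have : NeZero (k * (d + 1)) := ⟨by positivity⟩
  let E := FiniteField.Extension F p (k * (d + 1))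
  have : Fintype E := Fintype.ofFinite E
  have hK : finrank F E = k * d + k := by rw [FiniteField.finrank_extension]; ring
  have hcardE : Fintype.card E = q ^ (k * d) * q ^ k := by
    rw [card_eq_pow_finrank (K := F), hK, pow_add]
  have hS : (∑ t ∈ range k, q ^ t) * (q - 1) = q ^ k - 1 := geom_sum_mul_of_one_le hq.le k
  have hT : (∑ r ∈ range (d + 1), q ^ (k * r)) * (q ^ k - 1) = q ^ (k * d) * q ^ k - 1 := by
    simp only [pow_mul, ← pow_succ]
    exact geom_sum_mul_of_one_le (Nat.one_le_pow _ _ (by omega)) _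
  have hne : M / c * (c * ∑ t ∈ range k, q ^ t) = Fintype.card E - 1 := by
    rw [← mul_assoc, Nat.div_mul_cancel hc, hM, hcardE, ← hT, ← hS]
    ring
  have hqk : 1 < q ^ k := Nat.one_lt_pow hk.ne' hq
  have hn : q ^ (k * d) ≤ M / c :=
    le_of_mul_eq_mul_sub_one (by positivity) hqk (mul_geom_sum_lt_pow hq hk _ hcsmall)
      (hne.trans (by rw [hcardE]))
  have hhalf : (k * d + k) / 2 ≤ k * d := by
    have := Nat.le_mul_of_pos_right k hd
    omega
  have := sub_le_hq_of_mul_eq_card_sub_one hne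
    ((Nat.pow_le_pow_right (by omega) (hK ▸ hhalf)).trans hn)
  rwa [hK] at this
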